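/- A K-linear map P : R → R on the truncated polynomial algebra R = K ⊕ V is a Rota–Baxter operator of weight one if and only if there exist a scalar α ∈ {0, -1} ⊆ K and an idempotent Q ∈ End_K(V) (Q² = Q) such that P(a + u) = α·a - Q(u) for all a ∈ K and u ∈ V. -/

import Mathlib

/-!
Write an endomorphism of `K ⊕ M` as a block matrix `ofBlocks a w φ g`, so that `P 1 = a + w` and
`P u = φ u + g u` for `u ∈ M`. Comparing components of the Rota–Baxter identity of weight `μ` at
the pairs `(u, u)`, `(1, u)` and `(1, 1)` gives `φ(u)² = 0`, `g² = -μ g`, `a² + μ a = 0` and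
`2 g w + μ w = 0`. Applying `g` to the last relation yields `μ g w = 0`, so `g w = 0` and then
`w = 0` once `μ` is a unit. Conversely these conditions make the identity hold componentwise.
For weight one, `Q = -g` is the idempotent.
-/

open TrivSqZeroExt

def LinearMap.IsRotaBaxter {K A : Type*} [Semiring K] [NonUnitalNonAssocSemiring A] [Module K A]
    (μ : K) (P : A →ₗ[K] A) : Prop :=
  ∀ x y, P x * P y = P (x * P y + P x * y + μ • (x * y))

namespace TrivSqZeroExt

local notation "tsze" => TrivSqZeroExt

section Blocks

variable {K M : Type*} [CommSemiring K] [AddCommMonoid M] [Module K M]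

def ofBlocks (a : K) (w : M) (φ : M →ₗ[K] K) (g : Module.End K M) : Module.End K (tsze K M) where
  toFun x := inl (x.fst * a + φ x.snd) + inr (x.fst • w + g x.snd)
  map_add' x y := by
    ext <;> simp only [fst_add, snd_add, fst_inl, fst_inr, snd_inl, snd_inr, map_add, add_mul,
      add_smul] <;> abel
  map_smul' c x := by ext <;> simp [mul_assoc, smul_add, smul_smul]

variable {a a' : K} {w w' : M} {φ φ' : M →ₗ[K] K} {g g' : Module.End K M}

@[simp] lemma fst_ofBlocks_apply (x : tsze K M) :
    (ofBlocks a w φ g x).fst = x.fst * a + φ x.snd := by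
  simp [ofBlocks]

@[simp] lemma snd_ofBlocks_apply (x : tsze K M) :
    (ofBlocks a w φ g x).snd = x.fst • w + g x.snd := by
  simp [ofBlocks]

lemma eq_ofBlocks_iff (P : Module.End K (tsze K M)) :
    P = ofBlocks a w φ g ↔
      ∀ b u, P (inl b + inr u) = inl (b * a + φ u) + inr (b • w + g u) := by
  refine ⟨fun h b u => ?_, fun h => LinearMap.ext fun x => ?_⟩
  · subst h; ext <;> simp
  · induction x with
    | inl_add_inr b u => rw [h]; ext <;> simp

lemma exists_eq_ofBlocks (P : Module.End K (tsze K M)) : ∃ a w φ g, P = ofBlocks a w φ g := by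
  -- `tsze K M` is `K × M`, so `LinearMap.fst` serves as the linear first projection.
  refine ⟨(P 1).fst, (P 1).snd, (LinearMap.fst K K M : tsze K M →ₗ[K] K) ∘ₗ P ∘ₗ inrHom K M,
    sndHom K M ∘ₗ P ∘ₗ inrHom K M, (eq_ofBlocks_iff P).2 fun b u => ?_⟩
  have hinl : (inl b : tsze K M) = b • 1 := by ext <;> simp
  rw [map_add, hinl, map_smul]
  ext
  · simp; rfl
  · simp

lemma ofBlocks_inj :
    ofBlocks a w φ g = ofBlocks a' w' φ' g' ↔ a = a' ∧ w = w' ∧ φ = φ' ∧ g = g' := by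
  refine ⟨fun h => ?_, by rintro ⟨rfl, rfl, rfl, rfl⟩; rfl⟩
  have h1 := LinearMap.congr_fun h 1
  have hu := fun u => LinearMap.congr_fun h (inr u)
  refine ⟨by simpa using congrArg fst h1, by simpa using congrArg snd h1,
    LinearMap.ext fun u => ?_, LinearMap.ext fun u => ?_⟩
  · simpa using congrArg fst (hu u)
  · simpa using congrArg snd (hu u)

end Blocks

section RotaBaxter

variable {K M : Type*} [CommRing K] [AddCommGroup M] [Module K M] [Module Kᵐᵒᵖ M]
  [IsCentralScalar K M] {μ a : K} {w : M} {φ : M →ₗ[K] K} {g : Module.End K M}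

lemma linearMap_eq_zero_of_isRotaBaxter_ofBlocks [IsReduced K]
    (hP : (ofBlocks a w φ g).IsRotaBaxter μ) : φ = 0 := by
  ext u
  have h := congrArg fst (hP (inr u) (inr u))
  simp only [fst_mul, fst_ofBlocks_apply, fst_inr, zero_mul, snd_inr, zero_add, inr_mul_inr,
    smul_zero, add_zero, map_add, fst_add, snd_mul, snd_ofBlocks_apply, zero_smul, op_smul_eq_smul,
    map_smul, smul_eq_mul, mul_zero, MulOpposite.op_zero, left_eq_add] at h
  exact IsReduced.eq_zero _ ⟨2, by rwa [sq]⟩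

lemma comp_self_eq_of_isRotaBaxter_ofBlocks
    (hP : (ofBlocks a w φ g).IsRotaBaxter μ) : g ∘ₗ g = -μ • g := by
  ext v
  have h := congrArg snd (hP 1 (inr v))
  simp only [snd_mul, fst_ofBlocks_apply, fst_one, one_mul, snd_one, map_zero, add_zero,
    snd_ofBlocks_apply, fst_inr, zero_smul, snd_inr, zero_add, zero_mul, one_smul, op_smul_eq_smul,
    map_add, map_smul, snd_add, fst_mul, mul_zero, MulOpposite.op_zero, snd_smul] at h
  rw [LinearMap.comp_apply, LinearMap.smul_apply]
  linear_combination (norm := module) -h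

lemma mul_self_add_mul_eq_zero_of_isRotaBaxter_ofBlocks [IsReduced K]
    (hP : (ofBlocks a w φ g).IsRotaBaxter μ) : a * a + μ * a = 0 := by
  obtain rfl := linearMap_eq_zero_of_isRotaBaxter_ofBlocks hP
  have h := congrArg fst (hP 1 1)
  simp only [fst_mul, fst_ofBlocks_apply, fst_one, one_mul, snd_one, LinearMap.zero_apply,
    add_zero, mul_one, map_add, map_smul, fst_add, snd_ofBlocks_apply, one_smul, map_zero, fst_smul,
    smul_eq_mul] at h
  linear_combination -h

lemma eq_zero_of_isRotaBaxter_ofBlocks (hμ : IsUnit μ)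
    (hP : (ofBlocks a w φ g).IsRotaBaxter μ) : w = 0 := by
  have hgg := LinearMap.congr_fun (comp_self_eq_of_isRotaBaxter_ofBlocks hP) w
  rw [LinearMap.comp_apply, LinearMap.smul_apply] at hgg
  have h : (2 : K) • g w + μ • w = 0 := by
    have h := congrArg snd (hP 1 1)
    simp only [snd_mul, fst_ofBlocks_apply, fst_one, one_mul, snd_one, map_zero, add_zero,
      snd_ofBlocks_apply, one_smul, op_smul_eq_smul, mul_one, map_add, map_smul, snd_add,
      snd_smul] at h
    linear_combination (norm := module) -h
  have hgw : g w = 0 := by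
    have h' := congrArg g h
    simp only [map_add, map_smul, map_zero] at h'
    exact hμ.smul_eq_zero.mp (by linear_combination (norm := module) -h' + (2 : K) • hgg)
  exact hμ.smul_eq_zero.mp (by simpa [hgw] using h)

lemma isRotaBaxter_ofBlocks_zero_zero (ha : a * a + μ * a = 0) (hg : g ∘ₗ g = -μ • g) :
    (ofBlocks a 0 0 g).IsRotaBaxter μ := by
  have hgg (u : M) : g (g u) = -μ • g u := LinearMap.congr_fun hg u
  intro x y
  ext
  · simp only [fst_mul, fst_ofBlocks_apply, LinearMap.zero_apply, add_zero, map_add, map_smul,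
      fst_add, snd_mul, snd_ofBlocks_apply, smul_zero, zero_add, op_smul_eq_smul, fst_smul,
      smul_eq_mul]
    linear_combination -(x.fst * y.fst) * ha
  · simp only [snd_mul, fst_ofBlocks_apply, LinearMap.zero_apply, add_zero, snd_ofBlocks_apply,
      smul_zero, zero_add, map_add, map_smul, snd_add, fst_mul, hgg, op_smul_eq_smul, snd_smul]
    module

theorem isRotaBaxter_ofBlocks_iff [IsReduced K] (hμ : IsUnit μ) :
    (ofBlocks a w φ g).IsRotaBaxter μ ↔ a * a + μ * a = 0 ∧ w = 0 ∧ φ = 0 ∧ g ∘ₗ g = -μ • g := by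
  refine ⟨fun hP => ⟨mul_self_add_mul_eq_zero_of_isRotaBaxter_ofBlocks hP,
    eq_zero_of_isRotaBaxter_ofBlocks hμ hP, linearMap_eq_zero_of_isRotaBaxter_ofBlocks hP,
    comp_self_eq_of_isRotaBaxter_ofBlocks hP⟩, ?_⟩
  rintro ⟨ha, rfl, rfl, hg⟩
  exact isRotaBaxter_ofBlocks_zero_zero ha hg

end RotaBaxter

end TrivSqZeroExt

theorem weight_one_iff_general {K : Type*} [Field K] {n : ℕ}
    (P : TrivSqZeroExt K (Fin n → K) →ₗ[K] TrivSqZeroExt K (Fin n → K)) :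
    (∀ x y, P x * P y = P (x * P y + P x * y + (1 : K) • (x * y))) ↔
      ∃ (α : K) (Q : (Fin n → K) →ₗ[K] (Fin n → K)),
        (α = 0 ∨ α = -1) ∧ Q ∘ₗ Q = Q ∧
        ∀ (a : K) (u : Fin n → K), P (inl a + inr u) = inl (α * a) - inr (Q u) := by
  have hform (α : K) (Q : Module.End K (Fin n → K)) :
      (∀ b u, P (inl b + inr u) = inl (α * b) - inr (Q u)) ↔ P = ofBlocks α 0 0 (-Q) := by
    rw [eq_ofBlocks_iff]
    simp [mul_comm, sub_eq_add_neg]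
  have hroot (α : K) : α * α + 1 * α = 0 ↔ α = 0 ∨ α = -1 := by
    rw [one_mul, ← mul_add_one, mul_eq_zero, add_eq_zero_iff_eq_neg]
  simp_rw [hform]
  obtain ⟨a, w, φ, g, rfl⟩ := exists_eq_ofBlocks P
  simp_rw [ofBlocks_inj]
  change (ofBlocks a w φ g).IsRotaBaxter 1 ↔ _
  rw [isRotaBaxter_ofBlocks_iff isUnit_one]
  constructor
  · rintro ⟨ha, rfl, rfl, hg⟩
    refine ⟨a, -g, (hroot a).mp ha, LinearMap.ext fun u => ?_, rfl, rfl, rfl, (neg_neg g).symm⟩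
    simpa using LinearMap.congr_fun hg u
  · rintro ⟨α, Q, hα, hQ, rfl, rfl, rfl, rfl⟩
    exact ⟨(hroot _).mpr hα, rfl, rfl, by simpa using hQ⟩

/-- a `K`-linear map `P` on the truncated polynomial algebra `R = K ⊕ V`
is a Rota–Baxter operator of weight one iff there are `α ∈ {0, -1}` and an idempotent
`Q ∈ End_K(V)` with `P(a + u) = α • a - Q u`. -/
theorem weight_one_iff {K : Type*} [Field K] [CharZero K] {n : ℕ} (hn : 1 ≤ n)
    (P : TrivSqZeroExt K (Fin n → K) →ₗ[K] TrivSqZeroExt K (Fin n → K)) :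
    (∀ x y, P x * P y = P (x * P y + P x * y + (1 : K) • (x * y))) ↔
      ∃ (α : K) (Q : (Fin n → K) →ₗ[K] (Fin n → K)),
        (α = 0 ∨ α = -1) ∧ Q ∘ₗ Q = Q ∧
        ∀ (a : K) (u : Fin n → K), P (inl a + inr u) = inl (α * a) - inr (Q u) :=
  weight_one_iff_general P
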